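/- arXiv:2603.17088 — 11 statements merged into one kernel-verified Lean document; each statement's English description precedes it below -/
import Mathlib

section
/- Let X = X₁ × X₂ with X₁, X₂ convex subsets of Euclidean spaces, h(x₁, x₂) = h₁(x₁) + h₂(x₂), and x̄ = (x̄₁, x̄₂) a minimizer of h on X. Then h is strongly star quasiconvex with modulus γ ≥ 0 with respect to x̄ if and only if both h₁ and h₂ are strongly star quasiconvex with modulus γ with respect to x̄₁ and x̄₂ respectively (which are minimizers of h₁, h₂). -/
theorem stmt_2 {n₁ n₂ : ℕ}
    (X₁ : Set (EuclideanSpace ℝ (Fin n₁))) (X₂ : Set (EuclideanSpace ℝ (Fin n₂)))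
    (hX₁ : Convex ℝ X₁) (hX₂ : Convex ℝ X₂)
    (h₁ : EuclideanSpace ℝ (Fin n₁) → ℝ) (h₂ : EuclideanSpace ℝ (Fin n₂) → ℝ)
    (γ : ℝ) (hγ : 0 ≤ γ)
    (xbar₁ : EuclideanSpace ℝ (Fin n₁)) (xbar₂ : EuclideanSpace ℝ (Fin n₂))
    (hx₁ : xbar₁ ∈ X₁) (hx₂ : xbar₂ ∈ X₂)
    (hmin : ∀ y₁ ∈ X₁, ∀ y₂ ∈ X₂, h₁ xbar₁ + h₂ xbar₂ ≤ h₁ y₁ + h₂ y₂) :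
    (∀ y₁ ∈ X₁, ∀ y₂ ∈ X₂, ∀ l ∈ Set.Icc (0:ℝ) 1,
        h₁ (l • xbar₁ + (1 - l) • y₁) + h₂ (l • xbar₂ + (1 - l) • y₂) ≤
          h₁ y₁ + h₂ y₂ - l * (1 - l) * (γ / 2) * (‖y₁ - xbar₁‖ ^ 2 + ‖y₂ - xbar₂‖ ^ 2)) ↔
    (((∀ y₁ ∈ X₁, h₁ xbar₁ ≤ h₁ y₁) ∧
        ∀ y₁ ∈ X₁, ∀ l ∈ Set.Icc (0:ℝ) 1,
          h₁ (l • xbar₁ + (1 - l) • y₁) ≤ h₁ y₁ - l * (1 - l) * (γ / 2) * ‖y₁ - xbar₁‖ ^ 2) ∧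
      ((∀ y₂ ∈ X₂, h₂ xbar₂ ≤ h₂ y₂) ∧
        ∀ y₂ ∈ X₂, ∀ l ∈ Set.Icc (0:ℝ) 1,
          h₂ (l • xbar₂ + (1 - l) • y₂) ≤ h₂ y₂ - l * (1 - l) * (γ / 2) * ‖y₂ - xbar₂‖ ^ 2)) := by
  have combo : ∀ {m : ℕ} (l : ℝ) (x : EuclideanSpace ℝ (Fin m)),
      l • x + (1 - l) • x = x := by
    intro m l x
    rw [← add_smul]
    simp
  constructor
  · intro H
    refine ⟨⟨?_, ?_⟩, ?_, ?_⟩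
    · intro y₁ hy₁
      have := hmin y₁ hy₁ xbar₂ hx₂
      linarith
    · intro y₁ hy₁ l hl
      have := H y₁ hy₁ xbar₂ hx₂ l hl
      rw [combo] at this
      simp only [sub_self, norm_zero] at this
      nlinarith [sq_nonneg (‖y₁ - xbar₁‖)]
    · intro y₂ hy₂
      have := hmin xbar₁ hx₁ y₂ hy₂
      linarith
    · intro y₂ hy₂ l hl
      have := H xbar₁ hx₁ y₂ hy₂ l hl
      rw [combo] at this
      simp only [sub_self, norm_zero] at this
      nlinarith [sq_nonneg (‖y₂ - xbar₂‖)]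
  · rintro ⟨⟨_, H1⟩, _, H2⟩ y₁ hy₁ y₂ hy₂ l hl
    have a := H1 y₁ hy₁ l hl
    have b := H2 y₂ hy₂ l hl
    nlinarith
end

section
/- Let X = ∏ᵢ Xᵢ be a finite product of convex sets, h(x) = Σᵢ hᵢ(xᵢ), and x̄ = (x̄₁,...,x̄ₘ) a minimizer of h. If every hᵢ is quasiconvex on Xᵢ (h_i(λy + (1-λ)z) ≤ max{h_i(y), h_i(z)}), then h is star quasiconvex with respect to x̄: h(λx̄ + (1-λ)y) ≤ h(y) for all λ ∈ [0,1] and y ∈ X. -/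
theorem stmt_3 {m : ℕ} {n : Fin m → ℕ}
    (X : ∀ i, Set (EuclideanSpace ℝ (Fin (n i))))
    (hX : ∀ i, Convex ℝ (X i))
    (h : ∀ i, EuclideanSpace ℝ (Fin (n i)) → ℝ)
    (hqcx : ∀ i, ∀ y ∈ X i, ∀ z ∈ X i, ∀ l ∈ Set.Icc (0:ℝ) 1,
      h i (l • y + (1 - l) • z) ≤ max (h i y) (h i z))
    (xbar : ∀ i, EuclideanSpace ℝ (Fin (n i))) (hxbar : ∀ i, xbar i ∈ X i)
    (hmin : ∀ y : ∀ i, EuclideanSpace ℝ (Fin (n i)), (∀ i, y i ∈ X i) →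
      ∑ i, h i (xbar i) ≤ ∑ i, h i (y i)) :
    ∀ y : ∀ i, EuclideanSpace ℝ (Fin (n i)), (∀ i, y i ∈ X i) →
      ∀ l ∈ Set.Icc (0:ℝ) 1,
        ∑ i, h i (l • xbar i + (1 - l) • y i) ≤ ∑ i, h i (y i) := by
  intro y hy l hl
  -- coordinatewise minimality
  have hcoord : ∀ i, h i (xbar i) ≤ h i (y i) := by
    intro i
    have hmem : ∀ j, Function.update xbar i (y i) j ∈ X j := by
      intro j
      by_cases hj : j = i
      · subst hj; simp [Function.update_self]; exact hy j
      · simp [Function.update_of_ne hj]; exact hxbar j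
    have := hmin _ hmem
    have hsum : ∑ j, h j (Function.update xbar i (y i) j)
        = h i (y i) + ∑ j ∈ Finset.univ.erase i, h j (xbar j) := by
      rw [← Finset.add_sum_erase _ _ (Finset.mem_univ i)]
      congr 1
      · simp
      · exact Finset.sum_congr rfl fun j hj => by
          rw [Function.update_of_ne (Finset.ne_of_mem_erase hj)]
    rw [hsum, ← Finset.add_sum_erase _ (fun j => h j (xbar j)) (Finset.mem_univ i)] at this
    linarith
  apply Finset.sum_le_sum
  intro i _
  calc h i (l • xbar i + (1 - l) • y i) ≤ max (h i (xbar i)) (h i (y i)) :=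
        hqcx i (xbar i) (hxbar i) (y i) (hy i) l hl
    _ = h i (y i) := max_eq_right (hcoord i)
end

section
/- Let h₁ : ℝ → ℝ be the indicator-type function with h₁(0) = 0 and h₁(t) = 1 for t ≠ 0, and h₂(t) = t². Then h(x₁, x₂) = h₁(x₁) + h₂(x₂) is star quasiconvex with respect to (0,0) but is not quasiconvex on ℝ². -/
theorem stmt_7 (h₁ h₂ : ℝ → ℝ)
    (h₁def : h₁ 0 = 0 ∧ ∀ t : ℝ, t ≠ 0 → h₁ t = 1)
    (h₂def : ∀ t : ℝ, h₂ t = t ^ 2)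
    (h : ℝ × ℝ → ℝ) (hdef : ∀ p : ℝ × ℝ, h p = h₁ p.1 + h₂ p.2) :
    (∀ l ∈ Set.Icc (0:ℝ) 1, ∀ y : ℝ × ℝ,
        h (l • ((0, 0) : ℝ × ℝ) + (1 - l) • y) ≤ h y) ∧
    ¬ (∀ y z : ℝ × ℝ, ∀ l ∈ Set.Icc (0:ℝ) 1,
        h (l • y + (1 - l) • z) ≤ max (h y) (h z)) := by
  obtain ⟨h10, h1ne⟩ := h₁def
  constructor
  · rintro l ⟨hl0, hl1⟩ y
    rw [hdef, hdef]
    have hc1 : (l • ((0, 0) : ℝ × ℝ) + (1 - l) • y).1 = (1 - l) * y.1 := by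
      simp
    have hc2 : (l • ((0, 0) : ℝ × ℝ) + (1 - l) • y).2 = (1 - l) * y.2 := by
      simp
    rw [hc1, hc2, h₂def, h₂def]
    have hA : h₁ ((1 - l) * y.1) ≤ h₁ y.1 := by
      by_cases hy1 : y.1 = 0
      · simp [hy1, h10]
      · by_cases hz : (1 - l) * y.1 = 0
        · rw [hz, h10, h1ne y.1 hy1]; norm_num
        · rw [h1ne _ hz, h1ne y.1 hy1]
    have hB : ((1 - l) * y.2) ^ 2 ≤ y.2 ^ 2 := by nlinarith [mul_nonneg hl0 (sq_nonneg y.2), mul_nonneg (mul_nonneg hl0 (by linarith : (0:ℝ) ≤ 1 - l)) (sq_nonneg y.2)]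
    linarith
  · intro H
    have := H (1, 0) (0, 1) (1/2) (by norm_num)
    norm_num [hdef, Prod.smul_def, h₂def, h10, h1ne] at this
end

section
/- Let K ⊆ ℝⁿ be convex, h : K → ℝ strongly star quasiconvex with modulus γ ≥ 0 with respect to a minimizer x̄ ∈ K, and g : ℝ → ℝ differentiable and increasing with g'(t) ≥ μ ≥ 0 for all t in an interval containing h(K). Then g ∘ h is strongly star quasiconvex with modulus μγ with respect to x̄, which is a minimizer of g ∘ h. -/
lemma key_mvb (g : ℝ → ℝ) (hgdiff : Differentiable ℝ g) (μ : ℝ)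
    (J : Set ℝ) (hJ : Convex ℝ J) (hderiv : ∀ t ∈ J, μ ≤ deriv g t)
    {a b : ℝ} (ha : a ∈ J) (hb : b ∈ J) (hab : a ≤ b) :
    μ * (b - a) ≤ g b - g a := by
  rcases eq_or_lt_of_le hab with rfl | hlt
  · simp
  · obtain ⟨c, hc, hceq⟩ := exists_deriv_eq_slope g hlt
      (hgdiff.continuous.continuousOn) (fun x _ => (hgdiff.differentiableAt).differentiableWithinAt)
    have hcJ : c ∈ J := hJ.ordConnected.out ha hb ⟨le_of_lt hc.1, le_of_lt hc.2⟩
    have := hderiv c hcJ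
    rw [hceq] at this
    have hpos : 0 < b - a := by linarith
    calc μ * (b - a) ≤ (g b - g a) / (b - a) * (b - a) := by
          apply mul_le_mul_of_nonneg_right this (le_of_lt hpos)
      _ = g b - g a := by field_simp

theorem stmt_9 {n : ℕ} (K : Set (EuclideanSpace ℝ (Fin n))) (hK : Convex ℝ K)
    (h : EuclideanSpace ℝ (Fin n) → ℝ) (γ μ : ℝ) (hγ : 0 ≤ γ) (hμ : 0 ≤ μ)
    (g : ℝ → ℝ) (hgdiff : Differentiable ℝ g) (hginc : StrictMono g)
    (J : Set ℝ) (hJ : Convex ℝ J) (hJK : ∀ x ∈ K, h x ∈ J)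
    (hderiv : ∀ t ∈ J, μ ≤ deriv g t)
    (xbar : EuclideanSpace ℝ (Fin n)) (hxbar : xbar ∈ K)
    (hmin : ∀ y ∈ K, h xbar ≤ h y)
    (hstar : ∀ y ∈ K, ∀ l ∈ Set.Icc (0:ℝ) 1,
      h (l • xbar + (1 - l) • y) ≤ h y - l * (1 - l) * (γ / 2) * ‖y - xbar‖ ^ 2) :
    (∀ y ∈ K, g (h xbar) ≤ g (h y)) ∧
    (∀ y ∈ K, ∀ l ∈ Set.Icc (0:ℝ) 1,
      g (h (l • xbar + (1 - l) • y)) ≤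
        g (h y) - l * (1 - l) * (μ * γ / 2) * ‖y - xbar‖ ^ 2) := by
  constructor
  · exact fun y hy => hginc.monotone (hmin y hy)
  · intro y hy l hl
    obtain ⟨hl0, hl1⟩ := hl
    set z := l • xbar + (1 - l) • y with hz
    have hzK : z ∈ K := hK hxbar hy hl0 (by linarith) (by ring)
    have hstar' := hstar y hy l ⟨hl0, hl1⟩
    have hc : 0 ≤ l * (1 - l) * (γ / 2) * ‖y - xbar‖ ^ 2 := by
      apply mul_nonneg (mul_nonneg (mul_nonneg hl0 (by linarith)) (by linarith)) (sq_nonneg _)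
    have hzhy : h z ≤ h y := by linarith
    have hkey := key_mvb g hgdiff μ J hJ hderiv (hJK z hzK) (hJK y hy) hzhy
    have h2 : μ * (l * (1 - l) * (γ / 2) * ‖y - xbar‖ ^ 2) ≤ μ * (h y - h z) := by
      apply mul_le_mul_of_nonneg_left _ hμ
      linarith
    have : l * (1 - l) * (μ * γ / 2) * ‖y - xbar‖ ^ 2
        = μ * (l * (1 - l) * (γ / 2) * ‖y - xbar‖ ^ 2) := by ring
    rw [this]
    linarith [hkey]
end

section
/- Let Xᵢ = [aᵢ, bᵢ] with 0 < aᵢ < bᵢ, and let each hᵢ : Xᵢ → ℝ be star quasiconvex with respect to aᵢ ∈ argmin hᵢ. Then h(x₁,...,xₙ) = minᵢ hᵢ(xᵢ) is star quasiconvex with respect to x̄ = (a₁,...,aₙ), which is a minimizer of h on ∏ᵢ Xᵢ. -/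
theorem stmt_11 {n : ℕ} [NeZero n] (a b : Fin n → ℝ)
    (ha : ∀ i, 0 < a i) (hab : ∀ i, a i < b i)
    (h : Fin n → ℝ → ℝ)
    (hamin : ∀ i, ∀ y ∈ Set.Icc (a i) (b i), h i (a i) ≤ h i y)
    (hstar : ∀ i, ∀ y ∈ Set.Icc (a i) (b i), ∀ l ∈ Set.Icc (0:ℝ) 1,
      h i (l * a i + (1 - l) * y) ≤ h i y) :
    ∀ y : Fin n → ℝ, (∀ i, y i ∈ Set.Icc (a i) (b i)) →
      ((Finset.univ.inf' Finset.univ_nonempty fun i => h i (a i)) ≤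
        Finset.univ.inf' Finset.univ_nonempty fun i => h i (y i)) ∧
      ∀ l ∈ Set.Icc (0:ℝ) 1,
        (Finset.univ.inf' Finset.univ_nonempty fun i => h i (l * a i + (1 - l) * y i)) ≤
          Finset.univ.inf' Finset.univ_nonempty fun i => h i (y i) := by
  intro y hy
  constructor
  · apply Finset.le_inf'
    intro i _
    exact Finset.inf'_le_of_le _ (Finset.mem_univ i) (hamin i (y i) (hy i))
  · intro l hl
    apply Finset.le_inf'
    intro i _
    exact Finset.inf'_le_of_le _ (Finset.mem_univ i) (hstar i (y i) (hy i) l hl)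
end

section
/- Let X = ∏ᵢ Xᵢ with each Xᵢ convex, H(x) = ∏ᵢ hᵢ(xᵢ) with hᵢ(xᵢ) > 0 for all xᵢ ∈ Xᵢ, and let x̄ = (x̄₁,...,x̄ₘ) be a minimizer of H on X. Then H is star quasiconvex with respect to x̄ if and only if each hᵢ is star quasiconvex with respect to x̄ᵢ (which is a minimizer of hᵢ). -/
theorem stmt_13 {m : ℕ} {n : Fin m → ℕ}
    (X : ∀ i, Set (EuclideanSpace ℝ (Fin (n i)))) (hX : ∀ i, Convex ℝ (X i))
    (h : ∀ i, EuclideanSpace ℝ (Fin (n i)) → ℝ)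
    (hpos : ∀ i, ∀ x ∈ X i, 0 < h i x)
    (xbar : ∀ i, EuclideanSpace ℝ (Fin (n i))) (hxbar : ∀ i, xbar i ∈ X i)
    (hmin : ∀ y : ∀ i, EuclideanSpace ℝ (Fin (n i)), (∀ i, y i ∈ X i) →
      ∏ i, h i (xbar i) ≤ ∏ i, h i (y i)) :
    (∀ y : ∀ i, EuclideanSpace ℝ (Fin (n i)), (∀ i, y i ∈ X i) →
        ∀ l ∈ Set.Icc (0:ℝ) 1,
          ∏ i, h i (l • xbar i + (1 - l) • y i) ≤ ∏ i, h i (y i)) ↔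
    (∀ i, (∀ yi ∈ X i, h i (xbar i) ≤ h i yi) ∧
      ∀ yi ∈ X i, ∀ l ∈ Set.Icc (0:ℝ) 1,
        h i (l • xbar i + (1 - l) • yi) ≤ h i yi) := by
  constructor
  · intro H i
    have hCpos : (0:ℝ) < ∏ j ∈ Finset.univ.erase i, h j (xbar j) :=
      Finset.prod_pos (fun j _ => hpos j _ (hxbar j))
    have hupd : ∀ yi, yi ∈ X i → (∀ j, Function.update xbar i yi j ∈ X j) := by
      intro yi hyi j
      by_cases hj : j = i
      · subst hj; simpa using hyi
      · rw [Function.update_of_ne hj]; exact hxbar j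
    have herase : ∀ (f : ∀ j, EuclideanSpace ℝ (Fin (n j))),
        (∀ j ∈ Finset.univ.erase i, f j = xbar j) →
        ∏ j ∈ Finset.univ.erase i, h j (f j) = ∏ j ∈ Finset.univ.erase i, h j (xbar j) := by
      intro f hf
      exact Finset.prod_congr rfl (fun j hj => by rw [hf j hj])
    constructor
    · intro yi hyi
      have := hmin _ (hupd yi hyi)
      rw [← Finset.mul_prod_erase Finset.univ (fun j => h j (xbar j)) (Finset.mem_univ i),
          ← Finset.mul_prod_erase Finset.univ
            (fun j => h j (Function.update xbar i yi j)) (Finset.mem_univ i)] at this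
      simp only [Function.update_self] at this
      rw [herase (Function.update xbar i yi)
            (fun j hj => Function.update_of_ne (Finset.ne_of_mem_erase hj) _ _)] at this
      exact le_of_mul_le_mul_right this hCpos
    · intro yi hyi l hl
      have := H _ (hupd yi hyi) l hl
      rw [← Finset.mul_prod_erase Finset.univ
            (fun j => h j (l • xbar j + (1 - l) • Function.update xbar i yi j))
            (Finset.mem_univ i),
          ← Finset.mul_prod_erase Finset.univ
            (fun j => h j (Function.update xbar i yi j)) (Finset.mem_univ i)] at this
      simp only [Function.update_self] at this
      rw [herase (Function.update xbar i yi)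
            (fun j hj => Function.update_of_ne (Finset.ne_of_mem_erase hj) _ _),
          herase (fun j => l • xbar j + (1 - l) • Function.update xbar i yi j) (fun j hj => by
            show l • xbar j + (1 - l) • Function.update xbar i yi j = xbar j
            rw [Function.update_of_ne (Finset.ne_of_mem_erase hj)]
            exact Convex.combo_self (by ring) _)] at this
      exact le_of_mul_le_mul_right this hCpos
  · intro H y hy l hl
    apply Finset.prod_le_prod
    · intro i _
      have hz : l • xbar i + (1 - l) • y i ∈ X i :=
        hX i (hxbar i) (hy i) hl.1 (by linarith [hl.2]) (by ring)
      exact (hpos i _ hz).le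
    · intro i _
      exact (H i).2 (y i) (hy i) l hl
end

section
/- Let X = ∏ᵢ Xᵢ with each Xᵢ convex, hᵢ : Xᵢ → (0, ∞), and suppose each fᵢ := ln ∘ hᵢ is strongly star quasiconvex with modulus γ ≥ 0 with respect to x̄ᵢ ∈ argmin hᵢ. Let x̄ = (x̄₁,...,x̄ₘ) and H(x) = ∏ᵢ hᵢ(xᵢ). Then H is strongly star quasiconvex with modulus γ·H(x̄) with respect to x̄, which is a minimizer of H. -/
/-!
Taking logarithms, the star-quasiconvexity inequalities of the factors add up to
`log H(z) ≤ log H(y) - s` with `z = λx̄ + (1-λ)y` and `s = λ(1-λ)(γ/2)‖y - x̄‖²`.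
Passing back through `exp`, which lies above its tangent at `log H(z)`, gives
`H(z) ≤ H(y) - H(z) s`, and `H(z) ≥ H(x̄)` since `x̄` minimizes every factor.
-/

open Finset Real

theorem mul_log_sub_log_le_sub {a b : ℝ} (ha : 0 < a) (hb : 0 < b) :
    a * (log b - log a) ≤ b - a := by
  have hdiv := log_le_sub_one_of_pos (div_pos hb ha)
  rw [log_div hb.ne' ha.ne'] at hdiv
  calc a * (log b - log a) ≤ a * (b / a - 1) := mul_le_mul_of_nonneg_left hdiv ha.le
    _ = b - a := by field_simp

theorem le_sub_mul_of_log_le_log_sub {a b c s : ℝ} (ha : 0 < a) (hb : 0 < b) (hs : 0 ≤ s)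
    (hlog : log a ≤ log b - s) (hc : c ≤ a) : a ≤ b - c * s := by
  have : c * s ≤ b - a :=
    calc c * s ≤ a * s := mul_le_mul_of_nonneg_right hc hs
      _ ≤ a * (log b - log a) := mul_le_mul_of_nonneg_left (by linarith) ha.le
      _ ≤ b - a := mul_log_sub_log_le_sub ha hb
  linarith

theorem prod_le_prod_sub_mul_sum_of_log_le {ι : Type*} (t : Finset ι) {a b s : ι → ℝ} {c : ℝ}
    (ha : ∀ i ∈ t, 0 < a i) (hb : ∀ i ∈ t, 0 < b i) (hs : ∀ i ∈ t, 0 ≤ s i)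
    (hlog : ∀ i ∈ t, log (a i) ≤ log (b i) - s i) (hc : c ≤ ∏ i ∈ t, a i) :
    ∏ i ∈ t, a i ≤ ∏ i ∈ t, b i - c * ∑ i ∈ t, s i := by
  refine le_sub_mul_of_log_le_log_sub (prod_pos ha) (prod_pos hb) (sum_nonneg hs) ?_ hc
  rw [log_prod (fun i hi => (ha i hi).ne'), log_prod (fun i hi => (hb i hi).ne'),
    ← sum_sub_distrib]
  exact sum_le_sum hlog

theorem stmt_14 {m : ℕ} {n : Fin m → ℕ}
    (X : ∀ i, Set (EuclideanSpace ℝ (Fin (n i)))) (hX : ∀ i, Convex ℝ (X i))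
    (h : ∀ i, EuclideanSpace ℝ (Fin (n i)) → ℝ)
    (hpos : ∀ i, ∀ x ∈ X i, 0 < h i x)
    (γ : ℝ) (hγ : 0 ≤ γ)
    (xbar : ∀ i, EuclideanSpace ℝ (Fin (n i))) (hxbar : ∀ i, xbar i ∈ X i)
    (hamin : ∀ i, ∀ yi ∈ X i, h i (xbar i) ≤ h i yi)
    (hstar : ∀ i, ∀ yi ∈ X i, ∀ l ∈ Set.Icc (0:ℝ) 1,
      Real.log (h i (l • xbar i + (1 - l) • yi)) ≤
        Real.log (h i yi) - l * (1 - l) * (γ / 2) * ‖yi - xbar i‖ ^ 2) :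
    (∀ y : ∀ i, EuclideanSpace ℝ (Fin (n i)), (∀ i, y i ∈ X i) →
      ∏ i, h i (xbar i) ≤ ∏ i, h i (y i)) ∧
    (∀ y : ∀ i, EuclideanSpace ℝ (Fin (n i)), (∀ i, y i ∈ X i) →
      ∀ l ∈ Set.Icc (0:ℝ) 1,
        ∏ i, h i (l • xbar i + (1 - l) • y i) ≤
          ∏ i, h i (y i) -
            l * (1 - l) * ((γ * ∏ i, h i (xbar i)) / 2) * ∑ i, ‖y i - xbar i‖ ^ 2) := by
  have hmin : ∀ y : ∀ i, EuclideanSpace ℝ (Fin (n i)), (∀ i, y i ∈ X i) →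
      ∏ i, h i (xbar i) ≤ ∏ i, h i (y i) := fun y hy =>
    prod_le_prod (fun i _ => (hpos i _ (hxbar i)).le) (fun i _ => hamin i _ (hy i))
  refine ⟨hmin, fun y hy l hl => ?_⟩
  have hz : ∀ i, l • xbar i + (1 - l) • y i ∈ X i := fun i =>
    hX i (hxbar i) (hy i) hl.1 (by linarith [hl.2]) (by ring)
  have hl' : 0 ≤ l * (1 - l) := mul_nonneg hl.1 (by linarith [hl.2])
  have key := prod_le_prod_sub_mul_sum_of_log_le univ
    (fun i _ => hpos i _ (hz i)) (fun i _ => hpos i _ (hy i))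
    (fun i _ => by positivity) (fun i _ => hstar i (y i) (hy i) l hl) (hmin _ hz)
  rw [← mul_sum] at key
  linarith
end

section
/- Let h : X → (0, M] be strongly star quasiconvex with modulus γ ≥ 0 with respect to a minimizer x̄, where M > 0. Then ln ∘ h is strongly star quasiconvex with modulus γ/M with respect to x̄. -/
/-!
Since `h ≤ M`, the decrease `c = λ(1-λ)(γ/2)‖y - x̄‖²` of `h` along the segment towards `x̄` costs at
least `c / M` in logarithmic scale: `ln (h y - c) - ln (h y) = ln (1 - c / h y) ≤ -c / h y ≤ -c / M`.
-/

theorem Real.log_le_log_sub_div_of_le_sub {a b c M : ℝ} (ha : 0 < a) (hab : a ≤ b - c)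
    (hc : 0 ≤ c) (hbM : b ≤ M) : log a ≤ log b - c / M := by
  have hb : 0 < b := by linarith
  have hratio : log ((b - c) / b) ≤ (b - c) / b - 1 :=
    log_le_sub_one_of_pos (div_pos (ha.trans_le hab) hb)
  rw [log_div (ha.trans_le hab).ne' hb.ne'] at hratio
  have hsub : (b - c) / b - 1 = -(c / b) := by field_simp; ring
  calc log a ≤ log (b - c) := log_le_log ha hab
    _ ≤ log b - c / b := by linarith
    _ ≤ log b - c / M := by gcongr

section StrongStarQuasiconvex

variable {E : Type*} [NormedAddCommGroup E] [NormedSpace ℝ E]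

def StrongStarQuasiconvexOn (X : Set E) (f : E → ℝ) (xbar : E) (γ : ℝ) : Prop :=
  ∀ y ∈ X, ∀ l ∈ Set.Icc (0:ℝ) 1,
    f (l • xbar + (1 - l) • y) ≤ f y - l * (1 - l) * (γ / 2) * ‖y - xbar‖ ^ 2

theorem StrongStarQuasiconvexOn.log {X : Set E} {h : E → ℝ} {xbar : E} {M γ : ℝ}
    (hstar : StrongStarQuasiconvexOn X h xbar γ) (hX : Convex ℝ X) (hxbar : xbar ∈ X)
    (hγ : 0 ≤ γ) (hbd : ∀ x ∈ X, 0 < h x ∧ h x ≤ M) :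
    StrongStarQuasiconvexOn X (fun x => Real.log (h x)) xbar (γ / M) := by
  intro y hy l hl
  obtain ⟨hl0, hl1⟩ := hl
  have hz : l • xbar + (1 - l) • y ∈ X := hX hxbar hy hl0 (by linarith) (by ring)
  have hc : 0 ≤ l * (1 - l) * (γ / 2) * ‖y - xbar‖ ^ 2 := by
    have : 0 ≤ 1 - l := by linarith
    positivity
  have hmodulus : l * (1 - l) * ((γ / M) / 2) * ‖y - xbar‖ ^ 2
      = l * (1 - l) * (γ / 2) * ‖y - xbar‖ ^ 2 / M := by ring
  rw [hmodulus]
  exact Real.log_le_log_sub_div_of_le_sub (hbd _ hz).1 (hstar y hy l ⟨hl0, hl1⟩) hc (hbd y hy).2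

end StrongStarQuasiconvex

theorem stmt_15_general {n : ℕ} (X : Set (EuclideanSpace ℝ (Fin n))) (hX : Convex ℝ X)
    (h : EuclideanSpace ℝ (Fin n) → ℝ) (M γ : ℝ) (hγ : 0 ≤ γ)
    (hbd : ∀ x ∈ X, 0 < h x ∧ h x ≤ M)
    (xbar : EuclideanSpace ℝ (Fin n)) (hxbar : xbar ∈ X)
    (hstar : ∀ y ∈ X, ∀ l ∈ Set.Icc (0:ℝ) 1,
      h (l • xbar + (1 - l) • y) ≤ h y - l * (1 - l) * (γ / 2) * ‖y - xbar‖ ^ 2) :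
    ∀ y ∈ X, ∀ l ∈ Set.Icc (0:ℝ) 1,
      Real.log (h (l • xbar + (1 - l) • y)) ≤
        Real.log (h y) - l * (1 - l) * ((γ / M) / 2) * ‖y - xbar‖ ^ 2 :=
  StrongStarQuasiconvexOn.log hstar hX hxbar hγ hbd

theorem stmt_15 {n : ℕ} (X : Set (EuclideanSpace ℝ (Fin n))) (hX : Convex ℝ X)
    (h : EuclideanSpace ℝ (Fin n) → ℝ) (M γ : ℝ) (hM : 0 < M) (hγ : 0 ≤ γ)
    (hbd : ∀ x ∈ X, 0 < h x ∧ h x ≤ M)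
    (xbar : EuclideanSpace ℝ (Fin n)) (hxbar : xbar ∈ X)
    (hmin : ∀ y ∈ X, h xbar ≤ h y)
    (hstar : ∀ y ∈ X, ∀ l ∈ Set.Icc (0:ℝ) 1,
      h (l • xbar + (1 - l) • y) ≤ h y - l * (1 - l) * (γ / 2) * ‖y - xbar‖ ^ 2) :
    ∀ y ∈ X, ∀ l ∈ Set.Icc (0:ℝ) 1,
      Real.log (h (l • xbar + (1 - l) • y)) ≤
        Real.log (h y) - l * (1 - l) * ((γ / M) / 2) * ‖y - xbar‖ ^ 2 :=
  stmt_15_general X hX h M γ hγ hbd xbar hxbar hstar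
end

section
/- Let H(x₁,...,xₘ) = A·∏ᵢ xᵢ^{αᵢ} be the Cobb-Douglas function with A > 0 and αᵢ > 0, restricted to X = ∏ᵢ [aᵢ, bᵢ] with 0 < aᵢ < bᵢ < ∞. Then x̄ = (a₁,...,aₘ) is a minimizer of H on X and H is star quasiconvex with respect to x̄. -/
lemma cd_mono {m : ℕ} (A : ℝ) (hA : 0 < A) (α : Fin m → ℝ) (hα : ∀ i, 0 < α i)
    (u v : Fin m → ℝ) (hu : ∀ i, 0 < u i) (huv : ∀ i, u i ≤ v i) :
    A * ∏ i, u i ^ α i ≤ A * ∏ i, v i ^ α i := by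
  apply mul_le_mul_of_nonneg_left _ hA.le
  apply Finset.prod_le_prod
  · intro i _
    exact (Real.rpow_pos_of_pos (hu i) (α i)).le
  · intro i _
    exact Real.rpow_le_rpow (hu i).le (huv i) (hα i).le

theorem stmt_16 {m : ℕ} (A : ℝ) (hA : 0 < A) (α : Fin m → ℝ) (hα : ∀ i, 0 < α i)
    (a b : Fin m → ℝ) (ha : ∀ i, 0 < a i) (hab : ∀ i, a i < b i)
    (H : (Fin m → ℝ) → ℝ) (Hdef : ∀ x : Fin m → ℝ, H x = A * ∏ i, x i ^ α i) :
    ∀ y : Fin m → ℝ, (∀ i, y i ∈ Set.Icc (a i) (b i)) →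
      (H a ≤ H y) ∧
      ∀ l ∈ Set.Icc (0:ℝ) 1, H (fun i => l * a i + (1 - l) * y i) ≤ H y := by
  intro y hy
  have hy0 : ∀ i, 0 < y i := fun i => lt_of_lt_of_le (ha i) (hy i).1
  constructor
  · rw [Hdef, Hdef]
    exact cd_mono A hA α hα a y ha (fun i => (hy i).1)
  · intro l hl
    rw [Hdef, Hdef]
    apply cd_mono A hA α hα _ y
    · intro i
      rcases eq_or_lt_of_le hl.1 with h | h
      · simp [← h, hy0 i]
      · nlinarith [ha i, hy0 i, hl.2]
    · intro i
      have : l * a i + (1 - l) * y i ≤ l * y i + (1 - l) * y i := by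
        nlinarith [(hy i).1, hl.1]
      linarith [this]
end

section
/- Let f : I → ℝ be continuous and increasing on an interval I, with inverse f⁻¹, weights wᵢ > 0 with Σwᵢ = 1, and Xᵢ ⊆ I convex. Define M_f(x) = f⁻¹(Σᵢ wᵢ f(xᵢ)) on X = ∏ᵢ Xᵢ, and let x̄ = (x̄₁,...,x̄ₙ) be a minimizer of M_f. Then M_f is star quasiconvex with respect to x̄ if and only if each restriction f|_{Xᵢ} is star quasiconvex with respect to x̄ᵢ. -/
theorem stmt_17 {k : ℕ} (I : Set ℝ) (hI : Convex ℝ I)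
    (f : ℝ → ℝ) (hfc : ContinuousOn f I) (hfm : StrictMonoOn f I)
    (finv : ℝ → ℝ) (hleft : ∀ t ∈ I, finv (f t) = t)
    (hright : ∀ s ∈ f '' I, f (finv s) = s)
    (w : Fin k → ℝ) (hw : ∀ i, 0 < w i) (hw1 : ∑ i, w i = 1)
    (X : Fin k → Set ℝ) (hXI : ∀ i, X i ⊆ I) (hXc : ∀ i, Convex ℝ (X i))
    (hwd : ∀ x : Fin k → ℝ, (∀ i, x i ∈ X i) → (∑ i, w i * f (x i)) ∈ f '' I)
    (xbar : Fin k → ℝ) (hxbar : ∀ i, xbar i ∈ X i)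
    (hmin : ∀ y : Fin k → ℝ, (∀ i, y i ∈ X i) →
      finv (∑ i, w i * f (xbar i)) ≤ finv (∑ i, w i * f (y i))) :
    (∀ y : Fin k → ℝ, (∀ i, y i ∈ X i) → ∀ l ∈ Set.Icc (0:ℝ) 1,
        finv (∑ i, w i * f (l * xbar i + (1 - l) * y i)) ≤
          finv (∑ i, w i * f (y i))) ↔
    (∀ i, ∀ yi ∈ X i, ∀ l ∈ Set.Icc (0:ℝ) 1,
        f (l * xbar i + (1 - l) * yi) ≤ f yi) := by
  have key : ∀ a ∈ f '' I, ∀ b ∈ f '' I, (finv a ≤ finv b ↔ a ≤ b) := by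
    rintro a ⟨s, hs, rfl⟩ b ⟨t, ht, rfl⟩
    rw [hleft s hs, hleft t ht]
    exact (hfm.le_iff_le hs ht).symm
  constructor
  · intro h i yi hyi l hl
    set y : Fin k → ℝ := Function.update xbar i yi with hy
    have hyi' : y i = yi := Function.update_self i yi xbar
    have hyX : ∀ j, y j ∈ X j := by
      intro j
      by_cases hj : j = i
      · subst hj; rw [hyi']; exact hyi
      · rw [hy, Function.update_of_ne hj]; exact hxbar j
    have hcX : ∀ j, l * xbar j + (1 - l) * y j ∈ X j := fun j =>
      hXc j (hxbar j) (hyX j) hl.1 (by linarith [hl.2]) (by ring)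
    have h2 := (key _ (hwd _ hcX) _ (hwd _ hyX)).mp (h y hyX l hl)
    have hsum : ∀ (g : Fin k → ℝ), ∑ j, w j * g j
        = w i * g i + ∑ j ∈ Finset.univ \ {i}, w j * g j := by
      intro g
      exact Finset.sum_eq_add_sum_sdiff_singleton_of_mem (Finset.mem_univ i) _
    rw [hsum (fun j => f (l * xbar j + (1 - l) * y j)), hsum (fun j => f (y j))] at h2
    have heq : ∑ j ∈ Finset.univ \ {i}, w j * f (l * xbar j + (1 - l) * y j)
        = ∑ j ∈ Finset.univ \ {i}, w j * f (y j) := by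
      apply Finset.sum_congr rfl
      intro j hj
      have hj' : j ≠ i := by simpa using (Finset.mem_sdiff.mp hj).2
      have h3 : y j = xbar j := Function.update_of_ne hj' _ _
      rw [h3]
      have h4 : l * xbar j + (1 - l) * xbar j = xbar j := by ring
      rw [h4]
    rw [heq, hyi'] at h2
    have h5 : w i * f (l * xbar i + (1 - l) * yi) ≤ w i * f yi := by linarith
    exact le_of_mul_le_mul_left h5 (hw i)
  · intro h y hyX l hl
    have hcX : ∀ j, l * xbar j + (1 - l) * y j ∈ X j := fun j =>
      hXc j (hxbar j) (hyX j) hl.1 (by linarith [hl.2]) (by ring)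
    apply (key _ (hwd _ hcX) _ (hwd _ hyX)).mpr
    apply Finset.sum_le_sum
    intro j _
    exact mul_le_mul_of_nonneg_left (h j (y j) (hyX j) l hl) (hw j).le
end

section
/- Let f : I → ℝ be continuous and decreasing on an interval I, wᵢ > 0 with Σwᵢ = 1, Xᵢ ⊆ I convex, and M_f(x) = f⁻¹(Σᵢ wᵢ f(xᵢ)). Let x̄ be a minimizer of M_f on ∏ᵢ Xᵢ. Then M_f is star quasiconvex with respect to x̄ if and only if each f|_{Xᵢ} is star quasiconcave with respect to x̄ᵢ (i.e., f(λx̄ᵢ + (1-λ)y) ≥ f(y) for all λ ∈ [0,1], y ∈ Xᵢ). -/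
theorem stmt_18 {k : ℕ} (I : Set ℝ) (hI : Convex ℝ I)
    (f : ℝ → ℝ) (hfc : ContinuousOn f I) (hfm : StrictAntiOn f I)
    (finv : ℝ → ℝ) (hleft : ∀ t ∈ I, finv (f t) = t)
    (hright : ∀ s ∈ f '' I, f (finv s) = s)
    (w : Fin k → ℝ) (hw : ∀ i, 0 < w i) (hw1 : ∑ i, w i = 1)
    (X : Fin k → Set ℝ) (hXI : ∀ i, X i ⊆ I) (hXc : ∀ i, Convex ℝ (X i))
    (hwd : ∀ x : Fin k → ℝ, (∀ i, x i ∈ X i) → (∑ i, w i * f (x i)) ∈ f '' I)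
    (xbar : Fin k → ℝ) (hxbar : ∀ i, xbar i ∈ X i)
    (hmin : ∀ y : Fin k → ℝ, (∀ i, y i ∈ X i) →
      finv (∑ i, w i * f (xbar i)) ≤ finv (∑ i, w i * f (y i))) :
    (∀ y : Fin k → ℝ, (∀ i, y i ∈ X i) → ∀ l ∈ Set.Icc (0:ℝ) 1,
        finv (∑ i, w i * f (l * xbar i + (1 - l) * y i)) ≤
          finv (∑ i, w i * f (y i))) ↔
    (∀ i, ∀ yi ∈ X i, ∀ l ∈ Set.Icc (0:ℝ) 1,
        f yi ≤ f (l * xbar i + (1 - l) * yi)) := by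
  have hconvmem : ∀ i, ∀ yi ∈ X i, ∀ l ∈ Set.Icc (0:ℝ) 1,
      l * xbar i + (1 - l) * yi ∈ X i := by
    intro i yi hyi l hl
    have := hXc i (hxbar i) hyi (a := l) (b := 1 - l) hl.1 (by linarith [hl.2]) (by ring)
    simpa [smul_eq_mul] using this
  have hanti : ∀ A ∈ f '' I, ∀ B ∈ f '' I, A ≤ B → finv B ≤ finv A := by
    rintro A ⟨a, ha, rfl⟩ B ⟨b, hb, rfl⟩ hAB
    rw [hleft a ha, hleft b hb]
    by_contra h
    push_neg at h
    exact absurd (hfm ha hb h) (not_lt.2 hAB)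
  have hanti' : ∀ A ∈ f '' I, ∀ B ∈ f '' I, finv A ≤ finv B → B ≤ A := by
    rintro A ⟨a, ha, rfl⟩ B ⟨b, hb, rfl⟩ hAB
    rw [hleft a ha, hleft b hb] at hAB
    rcases eq_or_lt_of_le hAB with h | h
    · subst h; exact le_rfl
    · exact (hfm ha hb h).le
  constructor
  · intro h i yi hyi l hl
    set y : Fin k → ℝ := Function.update xbar i yi with hy
    have hymem : ∀ j, y j ∈ X j := by
      intro j; by_cases hj : j = i
      · subst hj; simpa [hy] using hyi
      · simpa [hy, Function.update_of_ne hj] using hxbar j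
    have key := h y hymem l hl
    have hconv : ∀ j, l * xbar j + (1 - l) * y j ∈ X j := fun j =>
      hconvmem j (y j) (hymem j) l hl
    have hA := hwd _ hconv
    have hB := hwd y hymem
    have hle := hanti' _ hA _ hB key
    have hsum1 : ∑ j, w j * f (y j)
        = w i * f yi + ∑ j ∈ {i}ᶜ, w j * f (xbar j) := by
      rw [Fintype.sum_eq_add_sum_compl i]
      congr 1
      · simp [hy]
      · apply Finset.sum_congr rfl
        intro j hj
        have hj' : j ≠ i := by simpa using hj
        simp [hy, Function.update_of_ne hj']
    have hsum2 : ∑ j, w j * f (l * xbar j + (1 - l) * y j)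
        = w i * f (l * xbar i + (1 - l) * yi) + ∑ j ∈ {i}ᶜ, w j * f (xbar j) := by
      rw [Fintype.sum_eq_add_sum_compl i]
      congr 1
      · simp [hy]
      · apply Finset.sum_congr rfl
        intro j hj
        have hj' : j ≠ i := by simpa using hj
        have : l * xbar j + (1 - l) * y j = xbar j := by
          simp [hy, Function.update_of_ne hj']; ring
        rw [this]
    rw [hsum1, hsum2] at hle
    have : w i * f yi ≤ w i * f (l * xbar i + (1 - l) * yi) := by linarith
    exact le_of_mul_le_mul_left this (hw i)
  · intro h y hy l hl
    have hconv : ∀ j, l * xbar j + (1 - l) * y j ∈ X j := fun j =>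
      hconvmem j (y j) (hy j) l hl
    exact hanti _ (hwd y hy) _ (hwd _ hconv)
      (Finset.sum_le_sum fun j _ =>
        mul_le_mul_of_nonneg_left (h j (y j) (hy j) l hl) (hw j).le)
end
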